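/- Let F be a field of characteristic zero, let a, d ∈ F be such that a + n·d ≠ 0 for every integer n, and let f : F → F be an SD map with f(a) = a, f(a + d) = a + d, and f(d) = d. Then f(a + n·d) = a + n·d for every integer n. -/

import Mathlib

/-!
An SD map commutes with the quotient `q(x, y) = (x + y) / (x - y)`. Since `q(y, x) = -q(x, y)`
and every `z ≠ 1` is some `q(x, 1)`, it is odd away from `1`; it also fixes `0` and `1`.
Conversely, if `y ≠ 0` is fixed, then `x` is fixed as soon as `q(x, y)` is, because
`t ↦ (t + y) / (t - y)` is injective when `2 ≠ 0`.

With `b = a / d`, the pairs `(a, d)` and `(a + d, a)` have the same quotients as `(b, 1)` and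
`(b + 1, b)`, so `b` and `b + 1` are fixed. Along a progression `c + n e` the pairs
`(c + (n + 2) e, c + n e)` and `(c + (n - 1) e, c + (n + 1) e)` have quotients
`(c + (n + 1) e) / e` and `-(c + n e) / e`, so two consecutive fixed terms propagate in both
directions once the terms divided by `e` are fixed. This applies first to `b + n` (with `e = 1`)
and then to `a + n d`, whose quotients by `d` are the `b + n`.
-/

/-- A function `f : F → F` on a field `F` is an *SD map* if for all `x ≠ y` one has
`f x ≠ f y` and `f ((x+y)/(x-y)) = (f x + f y) / (f x - f y)`. -/
def IsSDMap {F : Type*} [Field F] (f : F → F) : Prop :=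
  ∀ ⦃x y : F⦄, x ≠ y →
    f x ≠ f y ∧ f ((x + y) / (x - y)) = (f x + f y) / (f x - f y)

open Function

theorem add_mul_div_sub_mul {F : Type*} [Field F] {d : F} (hd : d ≠ 0) (x y : F) :
    (x * d + y * d) / (x * d - y * d) = (x + y) / (x - y) := by
  rw [← add_mul, ← sub_mul, mul_div_mul_right _ _ hd]

namespace IsSDMap

variable {F : Type*} [Field F] {f : F → F}

theorem isFixedPt_quot (hf : IsSDMap f) {x y : F} (hxy : x ≠ y) (hx : IsFixedPt f x)
    (hy : IsFixedPt f y) : IsFixedPt f ((x + y) / (x - y)) := by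
  rw [IsFixedPt, (hf hxy).2, hx.eq, hy.eq]

theorem map_neg_quot (hf : IsSDMap f) {x y : F} (hxy : x ≠ y) :
    f (-((x + y) / (x - y))) = -f ((x + y) / (x - y)) := by
  have hswap : ∀ s t : F, (t + s) / (t - s) = -((s + t) / (s - t)) := fun s t => by
    rw [add_comm, ← neg_sub, div_neg]
  rw [← hswap, (hf hxy.symm).2, (hf hxy).2, hswap]

variable [NeZero (2 : F)]

theorem map_zero (hf : IsSDMap f) : f 0 = 0 := by
  have h := hf.map_neg_quot (x := 1) (y := -1) fun h =>
    two_ne_zero (α := F) (by linear_combination h)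
  rw [add_neg_cancel, zero_div, neg_zero] at h
  exact (mul_eq_zero.mp (by linear_combination h : (2 : F) * f 0 = 0)).resolve_left two_ne_zero

theorem map_one (hf : IsSDMap f) : f 1 = 1 := by
  obtain ⟨hne, h⟩ := hf (one_ne_zero (α := F))
  rw [add_zero, sub_zero, div_one, hf.map_zero, add_zero, sub_zero] at h
  rw [hf.map_zero] at hne
  rwa [div_self hne] at h

theorem map_neg (hf : IsSDMap f) {z : F} (hz : z ≠ 1) : f (-z) = -f z := by
  have hz' : z - 1 ≠ 0 := sub_ne_zero.mpr hz
  have hinv : ((z + 1) / (z - 1) + 1) / ((z + 1) / (z - 1) - 1) = z := by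
    rw [div_add_one hz', div_sub_one hz', div_div_div_cancel_right₀ hz',
      show z + 1 + (z - 1) = 2 * z by ring, show z + 1 - (z - 1) = 2 by ring,
      mul_div_cancel_left₀ _ two_ne_zero]
  have hx : (z + 1) / (z - 1) ≠ 1 := by
    rw [Ne, div_eq_one_iff_eq hz']
    exact fun h => two_ne_zero (α := F) (by linear_combination h)
  simpa only [hinv] using hf.map_neg_quot hx

theorem isFixedPt_of_isFixedPt_quot (hf : IsSDMap f) {x y : F} (hxy : x ≠ y) (hy0 : y ≠ 0)
    (hy : IsFixedPt f y) (hq : IsFixedPt f ((x + y) / (x - y))) : IsFixedPt f x := by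
  obtain ⟨hne, h⟩ := hf hxy
  rw [hq.eq, hy.eq, div_eq_div_iff (sub_ne_zero.mpr hxy) (sub_ne_zero.mpr (hy.eq ▸ hne))] at h
  have h2y : 2 * y ≠ 0 := mul_ne_zero two_ne_zero hy0
  exact (mul_left_cancel₀ h2y (by linear_combination h) : f x = x)

theorem isFixedPt_of_isFixedPt_mul (hf : IsSDMap f) {x y d : F} (hd : d ≠ 0) (hxy : x ≠ y)
    (hy0 : y ≠ 0) (hy : IsFixedPt f y) (hxd : IsFixedPt f (x * d)) (hyd : IsFixedPt f (y * d)) :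
    IsFixedPt f x := by
  refine hf.isFixedPt_of_isFixedPt_quot hxy hy0 hy ?_
  rw [← add_mul_div_sub_mul hd]
  exact hf.isFixedPt_quot (mul_left_injective₀ hd |>.ne hxy) hxd hyd

theorem isFixedPt_add_two_mul (hf : IsSDMap f) {w e : F} (he : e ≠ 0) (hw0 : w ≠ 0)
    (hw : IsFixedPt f w) (hq : IsFixedPt f ((w + e) / e)) : IsFixedPt f (w + 2 * e) := by
  refine hf.isFixedPt_of_isFixedPt_quot ?_ hw0 hw ?_
  · simpa using mul_ne_zero (two_ne_zero (α := F)) he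
  · have h2 : (2 : F) ≠ 0 := two_ne_zero
    convert hq using 1
    field_simp
    ring

theorem isFixedPt_progression (hf : IsSDMap f) {c e : F} (he : e ≠ 0)
    (hne : ∀ n : ℤ, c + n * e ≠ 0) (h0 : IsFixedPt f c) (h1 : IsFixedPt f (c + e))
    (hquot : ∀ n : ℤ, IsFixedPt f (c + n * e) → IsFixedPt f ((c + n * e) / e)) (n : ℤ) :
    IsFixedPt f (c + n * e) := by
  have hsucc : ∀ m : ℤ, c + ((m + 1 : ℤ) : F) * e = c + m * e + e := fun m => by
    push_cast; ring
  let P (m : ℤ) := IsFixedPt f (c + m * e) ∧ IsFixedPt f (c + ((m + 1 : ℤ) : F) * e)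
  have up (m : ℤ) : P m → P (m + 1) := fun ⟨hm, hm1⟩ => by
    refine ⟨hm1, ?_⟩
    convert hf.isFixedPt_add_two_mul he (hne m) hm (hsucc m ▸ hquot _ hm1) using 1
    push_cast; ring
  have down (m : ℤ) : P m → P (m - 1) := fun ⟨hm, hm1⟩ => by
    refine ⟨?_, by rwa [sub_add_cancel]⟩
    have hq1 : (c + m * e) / e ≠ 1 := by
      rw [Ne, div_eq_one_iff_eq he]
      intro h
      exact hne (m - 1) (by push_cast; linear_combination h)
    have hq : IsFixedPt f ((c + ((m + 1 : ℤ) : F) * e + -e) / -e) := by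
      rw [hsucc, add_neg_cancel_right, div_neg, IsFixedPt, hf.map_neg hq1, hquot m hm]
    convert hf.isFixedPt_add_two_mul (neg_ne_zero.mpr he) (hne (m + 1)) hm1 hq using 1
    push_cast; ring
  exact (Int.induction_on (motive := P) n (by simpa [P] using ⟨h0, h1⟩) (fun i => up i)
    fun i => down _).1

end IsSDMap

/-- The AP lemma: an SD map fixing two consecutive terms and the common difference of
an arithmetic progression avoiding `0` fixes the whole progression. -/
theorem sd_map_fixes_arithmetic_progression {F : Type*} [Field F] [CharZero F]
    (f : F → F) (hf : IsSDMap f) (a d : F)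
    (hne : ∀ n : ℤ, a + (n : F) * d ≠ 0)
    (ha : f a = a) (had : f (a + d) = a + d) (hd : f d = d) :
    ∀ n : ℤ, f (a + (n : F) * d) = a + (n : F) * d := by
  rcases eq_or_ne d 0 with rfl | hd0
  · simpa using ha
  set b := a / d
  have hbd : b * d = a := div_mul_cancel₀ _ hd0
  have hb (n : ℤ) : (b + n) * d = a + n * d := by rw [add_mul, hbd]
  have hbn (n : ℤ) : b + n ≠ 0 := fun h => hne n (by rw [← hb, h, zero_mul])
  have hfb : IsFixedPt f b := by
    refine hf.isFixedPt_of_isFixedPt_mul hd0 ?_ one_ne_zero hf.map_one ?_ (by rwa [one_mul])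
    · simpa [← sub_eq_add_neg, sub_eq_zero] using hbn (-1)
    · rwa [hbd]
  have hfb1 : IsFixedPt f (b + 1) := by
    refine hf.isFixedPt_of_isFixedPt_mul hd0 (by simp) (by simpa using hbn 0) hfb ?_ ?_
    · rwa [add_mul, one_mul, hbd]
    · rwa [hbd]
  have hbprog (n : ℤ) : IsFixedPt f (b + n) := by
    simpa using hf.isFixedPt_progression one_ne_zero (by simpa using hbn) hfb hfb1 (by simp) n
  exact hf.isFixedPt_progression hd0 hne ha had fun n _ => by
    rw [← hb, mul_div_cancel_right₀ _ hd0]; exact hbprog n
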